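/- Let γ > 1 and let k ∈ ℝ be a gravity strength (k = G·m_s). Let ρ, w, p : (0,∞) → ℝ be differentiable functions with ρ(r) > 0, and assume the radial balance constraint p'(r) = ρ(r)·(w(r)²/r − k/r²) for all r > 0 (equivalently, d/dr(r·p(r)) = −ρ(r)·(k/r − w(r)²) + p(r)). Define on ℝ² ∖ {0}, with r = √(x² + y²), the time-independent fields ρ̃(x,y) = ρ(r), u(x,y) = −(y/r)·w(r), v(x,y) = (x/r)·w(r), p̃(x,y) = p(r). Then (ρ̃, u, v, p̃) satisfies all four equations of the two-dimensional compressible Euler system with gravity source of strength k at every point of ℝ² ∖ {0}: ∂_x(ρ̃u) + ∂_y(ρ̃v) = 0; ∂_x(ρ̃u² + p̃) + ∂_y(ρ̃uv) = −(x/r)·ρ̃·k/r²; ∂_x(ρ̃uv) + ∂_y(ρ̃v² + p̃) = −(y/r)·ρ̃·k/r²; ∂_x(u(ρ̃Ẽ + p̃)) + ∂_y(v(ρ̃Ẽ + p̃)) = −((x/r)u + (y/r)v)·ρ̃·k/r², where ρ̃Ẽ = p̃/(γ−1) + ρ̃(u² + v²)/2. -/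

import Mathlib

noncomputable section

/-- Partial derivative in the first (x) variable. -/
def pdX (F : ℝ → ℝ → ℝ) (x y : ℝ) : ℝ := deriv (fun s => F s y) x

/-- Partial derivative in the second (y) variable. -/
def pdY (F : ℝ → ℝ → ℝ) (x y : ℝ) : ℝ := deriv (fun s => F x s) y

/-- The radius `r = √(x² + y²)`. -/
def rad (x y : ℝ) : ℝ := Real.sqrt (x ^ 2 + y ^ 2)

/-- Radially symmetric density field. -/
def rhoRot (ρ : ℝ → ℝ) (x y : ℝ) : ℝ := ρ (rad x y)

/-- Cartesian x-velocity of a purely azimuthal flow with angular velocity `w(r)`. -/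
def uRot (w : ℝ → ℝ) (x y : ℝ) : ℝ := -(y / rad x y) * w (rad x y)

/-- Cartesian y-velocity of a purely azimuthal flow with angular velocity `w(r)`. -/
def vRot (w : ℝ → ℝ) (x y : ℝ) : ℝ := (x / rad x y) * w (rad x y)

/-- Radially symmetric pressure field. -/
def pRot (p : ℝ → ℝ) (x y : ℝ) : ℝ := p (rad x y)

/-- Total energy density `ρE = p/(γ−1) + ρ(u²+v²)/2` for the rotating fields. -/
def eRot (γ : ℝ) (ρ w p : ℝ → ℝ) (x y : ℝ) : ℝ :=
  pRot p x y / (γ - 1) + rhoRot ρ x y * (uRot w x y ^ 2 + vRot w x y ^ 2) / 2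

lemma rad_pos {x y : ℝ} (h : (x, y) ≠ (0, 0)) : 0 < rad x y := by
  apply Real.sqrt_pos.mpr
  rcases (not_and_or.mp (by simpa [Prod.ext_iff] using h)) with hx | hy
  · positivity
  · positivity

lemma hasDerivAt_radX (x y : ℝ) (h : 0 < rad x y) :
    HasDerivAt (fun s => rad s y) (x / rad x y) x := by
  have hne : x ^ 2 + y ^ 2 ≠ 0 := by
    intro hc
    simp [rad, hc] at h
  have h1 : HasDerivAt (fun s : ℝ => s ^ 2 + y ^ 2) (2 * x) x := by
    simpa using (hasDerivAt_pow 2 x).add_const (y ^ 2)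
  have h2 := (Real.hasDerivAt_sqrt hne).comp x h1
  have heq : 1 / (2 * Real.sqrt (x ^ 2 + y ^ 2)) * (2 * x) = x / rad x y := by
    rw [rad]; field_simp
  rw [heq] at h2
  exact h2

lemma hasDerivAt_radY (x y : ℝ) (h : 0 < rad x y) :
    HasDerivAt (fun t => rad x t) (y / rad x y) y := by
  have h1 := hasDerivAt_radX y x (by simpa [rad, add_comm] using h)
  have : (fun t => rad x t) = fun t => rad t x := by funext t; simp [rad, add_comm]
  rw [this]
  have h2 : rad y x = rad x y := by simp [rad, add_comm]
  rw [h2] at h1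
  exact h1

/-- a radially symmetric purely rotating flow satisfying the radial balance
`p'(r) = ρ(r)(w(r)²/r − k/r²)` is a stationary solution of the 2D compressible Euler
equations with gravity source of strength `k` on `ℝ² ∖ {0}`. -/
theorem stmt_0 (γ k : ℝ) (hγ : 1 < γ)
    (ρ w p : ℝ → ℝ)
    (hρdiff : ∀ r : ℝ, 0 < r → DifferentiableAt ℝ ρ r)
    (hwdiff : ∀ r : ℝ, 0 < r → DifferentiableAt ℝ w r)
    (hpdiff : ∀ r : ℝ, 0 < r → DifferentiableAt ℝ p r)
    (hρpos : ∀ r : ℝ, 0 < r → 0 < ρ r)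
    (hbal : ∀ r : ℝ, 0 < r → deriv p r = ρ r * (w r ^ 2 / r - k / r ^ 2)) :
    ∀ x y : ℝ, (x, y) ≠ (0, 0) →
      -- mass conservation
      (pdX (fun a b => rhoRot ρ a b * uRot w a b) x y
        + pdY (fun a b => rhoRot ρ a b * vRot w a b) x y = 0)
      ∧ -- x-momentum
      (pdX (fun a b => rhoRot ρ a b * uRot w a b ^ 2 + pRot p a b) x y
        + pdY (fun a b => rhoRot ρ a b * uRot w a b * vRot w a b) x y
        = -(x / rad x y) * rhoRot ρ x y * k / rad x y ^ 2)
      ∧ -- y-momentum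
      (pdX (fun a b => rhoRot ρ a b * uRot w a b * vRot w a b) x y
        + pdY (fun a b => rhoRot ρ a b * vRot w a b ^ 2 + pRot p a b) x y
        = -(y / rad x y) * rhoRot ρ x y * k / rad x y ^ 2)
      ∧ -- energy
      (pdX (fun a b => uRot w a b * (eRot γ ρ w p a b + pRot p a b)) x y
        + pdY (fun a b => vRot w a b * (eRot γ ρ w p a b + pRot p a b)) x y
        = -((x / rad x y) * uRot w x y + (y / rad x y) * vRot w x y)
            * rhoRot ρ x y * k / rad x y ^ 2) := by
  intro x y hxy
  have hR : 0 < rad x y := rad_pos hxy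
  have hR0 : rad x y ≠ 0 := ne_of_gt hR
  -- derivative combinators for radial composites
  have hX : ∀ f : ℝ → ℝ, DifferentiableAt ℝ f (rad x y) →
      HasDerivAt (fun s => f (rad s y)) (deriv f (rad x y) * (x / rad x y)) x := by
    intro f hf
    exact hf.hasDerivAt.comp x (hasDerivAt_radX x y hR)
  have hY : ∀ f : ℝ → ℝ, DifferentiableAt ℝ f (rad x y) →
      HasDerivAt (fun t => f (rad x t)) (deriv f (rad x y) * (y / rad x y)) y := by
    intro f hf
    exact hf.hasDerivAt.comp y (hasDerivAt_radY x y hR)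
  have hρR := hρdiff (rad x y) hR
  have hwR := hwdiff (rad x y) hR
  have hpR := hpdiff (rad x y) hR
  have hγ0 : γ - 1 ≠ 0 := by linarith
  -- radial profile functions
  set g : ℝ → ℝ := fun r => ρ r * w r / r with hg
  set h2 : ℝ → ℝ := fun r => ρ r * w r ^ 2 / r ^ 2 with hh2
  set q1 : ℝ → ℝ := fun r => w r * (p r / (γ - 1) + p r) / r with hq1
  set q2 : ℝ → ℝ := fun r => ρ r * w r ^ 3 / (2 * r ^ 3) with hq2
  have hgd : DifferentiableAt ℝ g (rad x y) := (hρR.mul hwR).div differentiableAt_id hR0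
  have hh2d : DifferentiableAt ℝ h2 (rad x y) :=
    (hρR.mul (hwR.pow 2)).div (differentiableAt_id.pow 2) (pow_ne_zero 2 hR0)
  have hq1d : DifferentiableAt ℝ q1 (rad x y) :=
    (hwR.mul ((hpR.div_const _).add hpR)).div differentiableAt_id hR0
  have hq2d : DifferentiableAt ℝ q2 (rad x y) :=
    (hρR.mul (hwR.pow 3)).div ((differentiableAt_id.pow 3).const_mul 2)
      (by positivity)
  constructor
  · -- mass
    have e1 : (fun s => rhoRot ρ s y * uRot w s y) = fun s => -y * g (rad s y) := by
      funext s; simp only [rhoRot, uRot, hg]; ring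
    have e2 : (fun t => rhoRot ρ x t * vRot w x t) = fun t => x * g (rad x t) := by
      funext t; simp only [rhoRot, vRot, hg]; ring
    have d1 : HasDerivAt (fun s => rhoRot ρ s y * uRot w s y)
        (-y * (deriv g (rad x y) * (x / rad x y))) x := by
      rw [e1]; exact (hX g hgd).const_mul (-y)
    have d2 : HasDerivAt (fun t => rhoRot ρ x t * vRot w x t)
        (x * (deriv g (rad x y) * (y / rad x y))) y := by
      rw [e2]; exact (hY g hgd).const_mul x
    simp only [pdX, pdY]
    rw [d1.deriv, d2.deriv]
    ring
  refine ⟨?_, ?_, ?_⟩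
  · -- x-momentum
    have e1 : (fun s => rhoRot ρ s y * uRot w s y ^ 2 + pRot p s y)
        = fun s => y ^ 2 * h2 (rad s y) + p (rad s y) := by
      funext s; simp only [rhoRot, uRot, pRot, hh2]; ring
    have e2 : (fun t => rhoRot ρ x t * uRot w x t * vRot w x t)
        = fun t => -x * (t * h2 (rad x t)) := by
      funext t; simp only [rhoRot, uRot, vRot, hh2]; ring
    have d1 : HasDerivAt (fun s => rhoRot ρ s y * uRot w s y ^ 2 + pRot p s y)
        (y ^ 2 * (deriv h2 (rad x y) * (x / rad x y))
          + deriv p (rad x y) * (x / rad x y)) x := by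
      rw [e1]; exact ((hX h2 hh2d).const_mul (y ^ 2)).add (hX p hpR)
    have d2 : HasDerivAt (fun t => rhoRot ρ x t * uRot w x t * vRot w x t)
        (-x * (1 * h2 (rad x y) + y * (deriv h2 (rad x y) * (y / rad x y)))) y := by
      rw [e2]; exact ((hasDerivAt_id y).mul (hY h2 hh2d)).const_mul (-x)
    simp only [pdX, pdY]
    rw [d1.deriv, d2.deriv, hbal (rad x y) hR]
    simp only [rhoRot, hh2]
    field_simp
    ring
  · -- y-momentum
    have e1 : (fun s => rhoRot ρ s y * uRot w s y * vRot w s y)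
        = fun s => -y * (s * h2 (rad s y)) := by
      funext s; simp only [rhoRot, uRot, vRot, hh2]; ring
    have e2 : (fun t => rhoRot ρ x t * vRot w x t ^ 2 + pRot p x t)
        = fun t => x ^ 2 * h2 (rad x t) + p (rad x t) := by
      funext t; simp only [rhoRot, vRot, pRot, hh2]; ring
    have d1 : HasDerivAt (fun s => rhoRot ρ s y * uRot w s y * vRot w s y)
        (-y * (1 * h2 (rad x y) + x * (deriv h2 (rad x y) * (x / rad x y)))) x := by
      rw [e1]; exact ((hasDerivAt_id x).mul (hX h2 hh2d)).const_mul (-y)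
    have d2 : HasDerivAt (fun t => rhoRot ρ x t * vRot w x t ^ 2 + pRot p x t)
        (x ^ 2 * (deriv h2 (rad x y) * (y / rad x y))
          + deriv p (rad x y) * (y / rad x y)) y := by
      rw [e2]; exact ((hY h2 hh2d).const_mul (x ^ 2)).add (hY p hpR)
    simp only [pdX, pdY]
    rw [d1.deriv, d2.deriv, hbal (rad x y) hR]
    simp only [rhoRot, hh2]
    field_simp
    ring
  · -- energy
    have e1 : (fun s => uRot w s y * (eRot γ ρ w p s y + pRot p s y))
        = fun s => -y * q1 (rad s y) + -y * ((y ^ 2 + s ^ 2) * q2 (rad s y)) := by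
      funext s; simp only [uRot, vRot, eRot, pRot, rhoRot, hq1, hq2]; ring
    have e2 : (fun t => vRot w x t * (eRot γ ρ w p x t + pRot p x t))
        = fun t => x * q1 (rad x t) + x * ((x ^ 2 + t ^ 2) * q2 (rad x t)) := by
      funext t; simp only [uRot, vRot, eRot, pRot, rhoRot, hq1, hq2]; ring
    have din1 : HasDerivAt (fun s : ℝ => y ^ 2 + s ^ 2) (2 * x) x := by
      simpa using ((hasDerivAt_pow 2 x).const_add (y ^ 2))
    have din2 : HasDerivAt (fun t : ℝ => x ^ 2 + t ^ 2) (2 * y) y := by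
      simpa using ((hasDerivAt_pow 2 y).const_add (x ^ 2))
    have d1 : HasDerivAt (fun s => uRot w s y * (eRot γ ρ w p s y + pRot p s y))
        (-y * (deriv q1 (rad x y) * (x / rad x y))
          + -y * (2 * x * q2 (rad x y)
            + (y ^ 2 + x ^ 2) * (deriv q2 (rad x y) * (x / rad x y)))) x := by
      rw [e1]
      exact ((hX q1 hq1d).const_mul (-y)).add
        ((din1.mul (hX q2 hq2d)).const_mul (-y))
    have d2 : HasDerivAt (fun t => vRot w x t * (eRot γ ρ w p x t + pRot p x t))
        (x * (deriv q1 (rad x y) * (y / rad x y))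
          + x * (2 * y * q2 (rad x y)
            + (x ^ 2 + y ^ 2) * (deriv q2 (rad x y) * (y / rad x y)))) y := by
      rw [e2]
      exact ((hY q1 hq1d).const_mul x).add
        ((din2.mul (hY q2 hq2d)).const_mul x)
    simp only [pdX, pdY]
    rw [d1.deriv, d2.deriv]
    simp only [uRot, vRot]
    ring
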